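/- Let C_a, C_t, N_a, s be positive reals and J ≥ 1 a natural number, and let 0 < x < 1. If C_a = C_t, then for every integer l with 1 ≤ l ≤ J one has γ_x(l) ≤ max(γ_x(⌊(J+1)/2⌋), γ_x(⌈(J+1)/2⌉)) (Proposition 1, Case II: the optimal active-IRS index is the middle IRS). -/
import Mathlib


open Real

/-- Received SNR in the multi-IRS WIT system, as a function of the AIRS index `l`:
`γ_x(l) = C_a·C_t·N_a·x^{2(J−1)} / (s·C_a·x^{2(J−l)} + s·C_t·x^{2(l−1)} + s²)`. -/
noncomputable def snr (Ca Ct Na s : ℝ) (J : ℕ) (x l : ℝ) : ℝ :=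
  Ca * Ct * Na * x ^ (2 * ((J : ℝ) - 1)) /
    (s * Ca * x ^ (2 * ((J : ℝ) - l)) + s * Ct * x ^ (2 * (l - 1)) + s ^ 2)

lemma key_convex (x : ℝ) (hx0 : 0 < x) (hx1 : x < 1) (i j i' j' : ℝ)
    (hsum : i + j = i' + j') (h1 : i ≤ j') (h2 : j' ≤ i') (h3 : i' ≤ j) :
    x ^ (2*i') + x ^ (2*j') ≤ x ^ (2*i) + x ^ (2*j) := by
  have e1 : x ^ (2*j') = x ^ (2*i) * x ^ (2*(j'-i)) := by
    rw [← Real.rpow_add hx0]; ring_nf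
  have e2 : x ^ (2*j) = x ^ (2*i') * x ^ (2*(j'-i)) := by
    rw [← Real.rpow_add hx0]; congr 1; linarith
  have hle1 : x ^ (2*i') ≤ x ^ (2*i) :=
    Real.rpow_le_rpow_of_exponent_ge hx0 hx1.le (by linarith)
  have hle2 : x ^ (2*(j'-i)) ≤ 1 :=
    Real.rpow_le_one hx0.le hx1.le (by linarith)
  have hpos : (0:ℝ) ≤ x ^ (2*(j'-i)) := Real.rpow_nonneg hx0.le _
  nlinarith [hle1, hle2, hpos]

/-- Proposition 1, Case II: if `C_a = C_t`, then among integer AIRS locations `1 ≤ l ≤ J`,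
the received SNR is maximized at `⌊(J+1)/2⌋` or `⌈(J+1)/2⌉` (the middle IRS). -/
theorem stmt_5 (Ca Ct Na s : ℝ) (hCa : 0 < Ca) (hCt : 0 < Ct) (hNa : 0 < Na) (hs : 0 < s)
    (J : ℕ) (hJ : 1 ≤ J) (x : ℝ) (hx0 : 0 < x) (hx1 : x < 1)
    (hCaCt : Ca = Ct) :
    ∀ l : ℤ, 1 ≤ l → l ≤ (J : ℤ) →
      snr Ca Ct Na s J x (l : ℝ) ≤
        max (snr Ca Ct Na s J x ((⌊((J : ℝ) + 1) / 2⌋ : ℤ) : ℝ))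
            (snr Ca Ct Na s J x ((⌈((J : ℝ) + 1) / 2⌉ : ℤ) : ℝ)) := by
  intro l hl1 hl2
  subst hCaCt
  set m : ℤ := ⌊((J : ℝ) + 1) / 2⌋ with hm
  have hmle : (m : ℝ) ≤ ((J : ℝ) + 1) / 2 := Int.floor_le _
  have hmgt : ((J : ℝ) + 1) / 2 < (m : ℝ) + 1 := Int.lt_floor_add_one _
  have h2m_le : 2 * m ≤ (J : ℤ) + 1 := by exact_mod_cast (by push_cast; linarith : ((2*m : ℤ) : ℝ) ≤ ((J:ℤ) : ℝ) + 1)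
  have hJ2m : (J : ℤ) ≤ 2 * m := by
    have h1 : ((J:ℤ) : ℝ) < ((2 * m + 1 : ℤ) : ℝ) := by push_cast; linarith
    have h2 : (J : ℤ) < 2 * m + 1 := by exact_mod_cast h1
    omega
  refine le_trans ?_ (le_max_left _ _)
  unfold snr
  have hkey : x ^ (2 * ((J : ℝ) - (m:ℝ))) + x ^ (2 * ((m:ℝ) - 1)) ≤
      x ^ (2 * ((J : ℝ) - (l:ℝ))) + x ^ (2 * ((l:ℝ) - 1)) := by
    rcases le_or_gt (2 * l) (J : ℤ) with h | h
    · have hlm : l ≤ m := by omega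
      have := key_convex x hx0 hx1 ((l:ℝ) - 1) ((J:ℝ) - l) ((J:ℝ) - m) ((m:ℝ) - 1)
        (by ring)
        (by have : ((l:ℤ):ℝ) ≤ ((m:ℤ):ℝ) := by exact_mod_cast hlm
            linarith)
        (by linarith)
        (by have : ((l:ℤ):ℝ) ≤ ((m:ℤ):ℝ) := by exact_mod_cast hlm
            linarith)
      linarith
    · have hlm : (J : ℤ) + 1 ≤ l + m := by omega
      have hlmr : ((J:ℤ):ℝ) + 1 ≤ ((l:ℤ):ℝ) + ((m:ℤ):ℝ) := by exact_mod_cast hlm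
      have := key_convex x hx0 hx1 ((J:ℝ) - l) ((l:ℝ) - 1) ((J:ℝ) - m) ((m:ℝ) - 1)
        (by ring) (by push_cast at hlmr ⊢; linarith) (by linarith)
        (by push_cast at hlmr ⊢; linarith)
      linarith
  have hnum : (0:ℝ) ≤ Ca * Ca * Na * x ^ (2 * ((J : ℝ) - 1)) := by positivity
  have hdenm : (0:ℝ) < s * Ca * x ^ (2 * ((J : ℝ) - (m:ℝ))) + s * Ca * x ^ (2 * ((m:ℝ) - 1)) + s ^ 2 := by
    positivity
  have hsCt : (0:ℝ) < s * Ca := mul_pos hs hCt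
  apply div_le_div_of_nonneg_left hnum hdenm
  nlinarith [hkey, hsCt]
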